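/- Positive formulas are preserved under public announcements: for every positive formula φ ∈ L_EL⁺, every epistemic formula ψ ∈ L_EL, and every pointed epistemic model M_s, if M_s ⊨ φ then M_s ⊨ [ψ]φ (that is, if moreover M_s ⊨ ψ, then (M|ψ)_s ⊨ φ). -/
import Mathlib


/-- An epistemic (S5) model. -/
structure EpiModel (A P : Type) where
  S : Type
  ne : Nonempty S
  rel : A → S → S → Prop
  equiv : ∀ a, Equivalence (rel a)
  val : P → Set S

/-- The language L_EL of epistemic logic. -/
inductive ELForm (A P : Type) where
  | atom : P → ELForm A P
  | neg : ELForm A P → ELForm A P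
  | and : ELForm A P → ELForm A P → ELForm A P
  | know : A → ELForm A P → ELForm A P

/-- Satisfaction of epistemic formulas. -/
def ELForm.sat {A P : Type} (M : EpiModel A P) : ELForm A P → M.S → Prop
  | .atom p, s => s ∈ M.val p
  | .neg φ, s => ¬ ELForm.sat M φ s
  | .and φ ψ, s => ELForm.sat M φ s ∧ ELForm.sat M ψ s
  | .know a φ, s => ∀ t, M.rel a s t → ELForm.sat M φ t

/-- Positive formulas L_EL⁺. -/
inductive PosForm (A P : Type) where
  | atom : P → PosForm A P
  | natom : P → PosForm A P
  | and : PosForm A P → PosForm A P → PosForm A P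
  | or : PosForm A P → PosForm A P → PosForm A P
  | know : A → PosForm A P → PosForm A P

/-- Satisfaction of positive formulas, relativized to a current domain `D`:
`PosForm.sat M φ D s` says that φ holds at state `s` of the restriction of
`M` to `D`. -/
def PosForm.sat {A P : Type} (M : EpiModel A P) : PosForm A P → Set M.S → M.S → Prop
  | .atom p, _, s => s ∈ M.val p
  | .natom p, _, s => s ∉ M.val p
  | .and φ ψ, D, s => PosForm.sat M φ D s ∧ PosForm.sat M ψ D s
  | .or φ ψ, D, s => PosForm.sat M φ D s ∨ PosForm.sat M ψ D s
  | .know a φ, D, s => ∀ t, M.rel a s t → t ∈ D → PosForm.sat M φ D t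

theorem PosForm.sat_mono {A P : Type} (M : EpiModel A P) (φ : PosForm A P)
    {D D' : Set M.S} (h : D' ⊆ D) : ∀ s, PosForm.sat M φ D s → PosForm.sat M φ D' s := by
  induction φ with
  | atom p => exact fun s h => h
  | natom p => exact fun s h => h
  | and φ ψ ih1 ih2 => exact fun s ⟨h1, h2⟩ => ⟨ih1 s h1, ih2 s h2⟩
  | or φ ψ ih1 ih2 => exact fun s h => h.elim (fun h1 => Or.inl (ih1 s h1)) (fun h2 => Or.inr (ih2 s h2))
  | know a φ ih => exact fun s hs t hrel htD => ih t (hs t hrel (h htD))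

/-- Positive formulas are preserved under public
announcements: if `M_s ⊨ φ` (with φ positive) then `M_s ⊨ [ψ]φ` for every
epistemic formula ψ; i.e., if moreover `M_s ⊨ ψ` then `(M|ψ)_s ⊨ φ`, where
`M|ψ` is the restriction of `M` to the states satisfying ψ. -/
theorem positive_preserved_under_announcements
    (A P : Type) (M : EpiModel A P) (s : M.S)
    (φ : PosForm A P) (ψ : ELForm A P)
    (hφ : PosForm.sat M φ Set.univ s) (hψ : ELForm.sat M ψ s) :
    PosForm.sat M φ {t | ELForm.sat M ψ t} s := by
  exact PosForm.sat_mono M φ (Set.subset_univ _) s hφ
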